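/- (IQE Universal Approximation.) Let X be a compact topological space and d : X × X → ℝ a continuous quasimetric (d ≥ 0, d(x, x) = 0, and d(x, z) ≤ d(x, y) + d(y, z) for all x, y, z ∈ X). Then for every ε > 0 there exist N, M ∈ ℕ, a continuous map f : X → ℝ^{N×M}, and α ∈ [0,1] such that, defining for each i the component d^{(i)}(x, y) = λ(⋃_{j=1}^{M} [f(x)_{ij}, max(f(x)_{ij}, f(y)_{ij})]) (λ denoting Lebesgue measure on ℝ) and d_θ(x, y) = α·max_{1≤i≤N} d^{(i)}(x, y) + (1 − α)·(1/N)·Σ_{i=1}^{N} d^{(i)}(x, y), one has |d_θ(x, y) − d(x, y)| ≤ ε for all x, y ∈ X. -/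
import Mathlib


open MeasureTheory

/-- **IQE Universal Approximation, general case.**
For any compact topological space `X` with a continuous quasimetric `d`, and any
`ε > 0`, there exist `N, M`, a continuous `f : X → ℝ^{N×M}` and `α ∈ [0,1]` such that
the IQE-maxmean distance
`d_θ(x, y) = α · max_i d⁽ⁱ⁾(x, y) + (1 - α) · mean_i d⁽ⁱ⁾(x, y)`,
where `d⁽ⁱ⁾(x, y)` is the Lebesgue measure of `⋃_j [f(x)_{ij}, max(f(x)_{ij}, f(y)_{ij})]`,
approximates `d` uniformly within `ε`. -/
theorem iqe_universal_approximation
    {X : Type*} [TopologicalSpace X] [CompactSpace X]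
    (d : X → X → ℝ)
    (hd_cont : Continuous fun p : X × X => d p.1 p.2)
    (hd_nonneg : ∀ x y, 0 ≤ d x y)
    (hd_refl : ∀ x, d x x = 0)
    (hd_triangle : ∀ x y z, d x z ≤ d x y + d y z) :
    ∀ ε > (0 : ℝ), ∃ (N M : ℕ), ∃ hN : 0 < N,
      ∃ (f : X → Fin N → Fin M → ℝ) (α : ℝ),
        Continuous f ∧ α ∈ Set.Icc (0 : ℝ) 1 ∧
        ∀ x y : X,
          |(α * (Finset.univ.sup' ⟨⟨0, hN⟩, Finset.mem_univ _⟩ fun i =>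
              (volume (⋃ j : Fin M, Set.Icc (f x i j) (max (f x i j) (f y i j)))).toReal)
            + (1 - α) * ((∑ i : Fin N,
              (volume (⋃ j : Fin M, Set.Icc (f x i j) (max (f x i j) (f y i j)))).toReal) / N))
            - d x y| ≤ ε := by
  intro ε hε
  rcases isEmpty_or_nonempty X with h | h
  · refine ⟨1, 1, one_pos, fun _ _ _ => 0, 1, continuous_const,
      ⟨zero_le_one, le_refl 1⟩, fun x => (IsEmpty.false x).elim⟩
  · -- cover X by symmetrized ε-balls
    set U : X → Set X := fun z => {x | d z x + d x z < ε} with hU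
    have hUopen : ∀ z, IsOpen (U z) := by
      intro z
      have h1 : Continuous fun x : X => d z x :=
        hd_cont.comp (Continuous.prodMk_right z)
      have h2 : Continuous fun x : X => d x z :=
        hd_cont.comp (continuous_id.prodMk continuous_const)
      exact isOpen_lt (h1.add h2) continuous_const
    have hcover : (Set.univ : Set X) ⊆ ⋃ z, U z := by
      intro x _
      exact Set.mem_iUnion.mpr ⟨x, by simp [U, hd_refl x, hε]⟩
    obtain ⟨t, ht⟩ := isCompact_univ.elim_finite_subcover U hUopen hcover
    have htne : t.Nonempty := by
      obtain ⟨x⟩ := h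
      obtain ⟨z, hz, _⟩ := Set.mem_iUnion₂.mp (ht (Set.mem_univ x))
      exact ⟨z, hz⟩
    have hN : 0 < t.card := Finset.card_pos.mpr htne
    set e := t.equivFin.symm with he
    set z : Fin t.card → X := fun i => (e i : X) with hz
    refine ⟨t.card, 1, hN, fun x i _ => d (z i) x, 1, ?_, ⟨zero_le_one, le_refl 1⟩, ?_⟩
    · exact continuous_pi fun i => continuous_pi fun _ =>
        hd_cont.comp (Continuous.prodMk_right (z i))
    · intro x y
      have hvol : ∀ i : Fin t.card,
          (volume (⋃ _ : Fin 1, Set.Icc (d (z i) x)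
            (max (d (z i) x) (d (z i) y)))).toReal
          = max (d (z i) x) (d (z i) y) - d (z i) x := by
        intro i
        rw [Set.iUnion_const, Real.volume_Icc,
          ENNReal.toReal_ofReal (sub_nonneg.mpr (le_max_left _ _))]
      simp only [one_mul, sub_self, zero_mul, add_zero, hvol]
      rw [abs_le]
      constructor
      · rw [neg_le, neg_sub, sub_le_comm]
        -- lower bound: pick i with x in U (z i)
        obtain ⟨w, hw, hxw⟩ := Set.mem_iUnion₂.mp (ht (Set.mem_univ x))
        set i : Fin t.card := t.equivFin ⟨w, hw⟩ with hi
        have hzi : z i = w := by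
          simp [z, e, i]
        have hle : d x y - ε ≤ max (d (z i) x) (d (z i) y) - d (z i) x := by
          rw [hzi]
          have h1 : d w x + d x w < ε := hxw
          have h2 : d x y ≤ d x w + d w y := hd_triangle x w y
          have h3 : d w y ≤ max (d w x) (d w y) := le_max_right _ _
          linarith [le_max_right (d w x) (d w y)]
        calc d x y - ε ≤ max (d (z i) x) (d (z i) y) - d (z i) x := hle
          _ ≤ _ := Finset.le_sup' (fun i => max (d (z i) x) (d (z i) y) - d (z i) x) (Finset.mem_univ i)
      · apply sub_le_iff_le_add.mpr
        apply Finset.sup'_le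
        intro i _
        have h2 : d (z i) y ≤ d (z i) x + d x y := hd_triangle (z i) x y
        have h3 : 0 ≤ d x y := hd_nonneg x y
        rw [sub_le_iff_le_add, max_le_iff]
        constructor <;> linarith
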